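/- arXiv:1009.3737 — 2 statements merged into one kernel-verified Lean document; each statement's English description precedes it below -/
import Mathlib

section
/- Let (X,d) be a metric space, φ: X → (−∞,∞] proper, and suppose that for every initial point in D(φ) there is a curve (S_t x)_{t≥0} with S_0 x = x, S_t x → x as t↓0, satisfying the integrated EVI: (e^{λt}/2)d²(S_t x, v) − ½d²(x, v) ≤ E_λ(t)(φ(v) − φ(S_t x)) for all v ∈ D(φ) and t > 0, where E_λ(t) = (e^{λt}−1)/λ (= t if λ=0). Then φ is λ-convex along any constant speed geodesic γ: [0,1] → X with endpoints γ₀, γ₁ ∈ D(φ): φ(γ_s) ≤ (1−s)φ(γ₀) + s·φ(γ₁) − (λ/2)s(1−s)d²(γ₀,γ₁), provided φ(S_t γ_s) → φ(γ_s) in the liminf sense as t↓0 (φ lower semicontinuous and S_t γ_s → γ_s). -/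
open Filter

/-- The auxiliary function `E_λ(t) = ∫₀ᵗ e^{λ r} dr`. -/
noncomputable def Elam (lam t : ℝ) : ℝ := ∫ r in (0:ℝ)..t, Real.exp (lam * r)

lemma elam_pos (lam : ℝ) {t : ℝ} (ht : 0 < t) : 0 < Elam lam t := by
  apply intervalIntegral.intervalIntegral_pos_of_pos_on
  · exact (Real.continuous_exp.comp (continuous_const.mul continuous_id)).intervalIntegrable 0 t
  · intro x _; exact Real.exp_pos _
  · exact ht

lemma lam_mul_elam (lam t : ℝ) : lam * Elam lam t = Real.exp (lam * t) - 1 := by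
  by_cases hl : lam = 0
  · simp [Elam, hl]
  · have : Elam lam t = lam⁻¹ * (Real.exp (t * lam) - Real.exp (0 * lam)) := by
      unfold Elam
      simp_rw [mul_comm lam]
      rw [intervalIntegral.integral_comp_mul_right Real.exp hl, integral_exp, smul_eq_mul]
    rw [this, mul_comm t lam, zero_mul, Real.exp_zero]
    field_simp

theorem evi_flow_implies_geodesic_convexity
    {X : Type*} [MetricSpace X] (lam : ℝ) (φ : X → EReal)
    (hbot : ∀ x, φ x ≠ ⊥) (hproper : ∃ x, φ x ≠ ⊤)
    (hlsc : LowerSemicontinuous φ)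
    (S : ℝ → X → X)
    (hS0 : ∀ x, S 0 x = x)
    (hScont : ∀ x, Tendsto (fun t => S t x) (nhdsWithin 0 (Set.Ioi 0)) (nhds x))
    (hEVI : ∀ x : X, ∀ v : X, φ v ≠ ⊤ → ∀ t : ℝ, 0 < t →
        ((Real.exp (lam * t) / 2 * dist (S t x) v ^ 2 - 1 / 2 * dist x v ^ 2 : ℝ) : EReal)
          ≤ ((Elam lam t : ℝ) : EReal) * (φ v - φ (S t x)))
    (γ : ℝ → X)
    (hgeo : ∀ s t : ℝ, s ∈ Set.Icc (0:ℝ) 1 → t ∈ Set.Icc (0:ℝ) 1 →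
        dist (γ s) (γ t) = |s - t| * dist (γ 0) (γ 1))
    (h0 : φ (γ 0) ≠ ⊤) (h1 : φ (γ 1) ≠ ⊤) :
    ∀ s : ℝ, s ∈ Set.Icc (0:ℝ) 1 →
      φ (γ s) ≤ ((1 - s : ℝ) : EReal) * φ (γ 0) + ((s : ℝ) : EReal) * φ (γ 1) -
        ((lam / 2 * s * (1 - s) * dist (γ 0) (γ 1) ^ 2 : ℝ) : EReal) := by
  intro s hs
  obtain ⟨hs0, hs1⟩ := hs
  set D : ℝ := dist (γ 0) (γ 1) with hD
  set p0 : ℝ := (φ (γ 0)).toReal with hp0def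
  set p1 : ℝ := (φ (γ 1)).toReal with hp1def
  have hp0 : φ (γ 0) = (p0 : EReal) := (EReal.coe_toReal h0 (hbot _)).symm
  have hp1 : φ (γ 1) = (p1 : EReal) := (EReal.coe_toReal h1 (hbot _)).symm
  set c : ℝ := (1 - s) * p0 + s * p1 - lam / 2 * s * (1 - s) * D ^ 2 with hc
  have hrhs : ((1 - s : ℝ) : EReal) * φ (γ 0) + ((s : ℝ) : EReal) * φ (γ 1) -
        ((lam / 2 * s * (1 - s) * D ^ 2 : ℝ) : EReal) = (c : EReal) := by
    rw [hp0, hp1, ← EReal.coe_mul, ← EReal.coe_mul, ← EReal.coe_add, ← EReal.coe_sub]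
  rw [hrhs]
  -- distances from γ s to the endpoints
  have hIcc0 : (0:ℝ) ∈ Set.Icc (0:ℝ) 1 := ⟨le_refl _, zero_le_one⟩
  have hIcc1 : (1:ℝ) ∈ Set.Icc (0:ℝ) 1 := ⟨zero_le_one, le_refl _⟩
  have hd0 : dist (γ s) (γ 0) = s * D := by
    rw [hgeo s 0 ⟨hs0, hs1⟩ hIcc0]; rw [sub_zero, abs_of_nonneg hs0]
  have hd1 : dist (γ s) (γ 1) = (1 - s) * D := by
    rw [hgeo s 1 ⟨hs0, hs1⟩ hIcc1]
    rw [abs_of_nonpos (by linarith), neg_sub]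
  -- key claim: along the flow started at γ s, φ is bounded by c
  have claim : ∀ t : ℝ, 0 < t → φ (S t (γ s)) ≤ (c : EReal) := by
    intro t ht
    set y := S t (γ s) with hy
    have hE : 0 < Elam lam t := elam_pos lam ht
    have het : (0:ℝ) < Real.exp (lam * t) := Real.exp_pos _
    -- φ y is not ⊤
    have hyne : φ y ≠ ⊤ := by
      intro htop
      have h := hEVI (γ s) (γ 0) h0 t ht
      rw [← hy, htop, hp0, EReal.sub_top] at h
      rw [EReal.mul_bot_of_pos (by exact_mod_cast hE)] at h
      exact (EReal.coe_ne_bot _) (le_bot_iff.mp h)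
    set q : ℝ := (φ y).toReal with hqdef
    have hq : φ y = (q : EReal) := (EReal.coe_toReal hyne (hbot _)).symm
    -- extract the real inequalities
    have h₀ : Real.exp (lam * t) / 2 * dist y (γ 0) ^ 2 - 1 / 2 * dist (γ s) (γ 0) ^ 2 ≤
        Elam lam t * (p0 - q) := by
      have h := hEVI (γ s) (γ 0) h0 t ht
      rw [← hy, hq, hp0, ← EReal.coe_sub, ← EReal.coe_mul] at h
      exact_mod_cast h
    have h₁ : Real.exp (lam * t) / 2 * dist y (γ 1) ^ 2 - 1 / 2 * dist (γ s) (γ 1) ^ 2 ≤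
        Elam lam t * (p1 - q) := by
      have h := hEVI (γ s) (γ 1) h1 t ht
      rw [← hy, hq, hp1, ← EReal.coe_sub, ← EReal.coe_mul] at h
      exact_mod_cast h
    rw [hd0] at h₀; rw [hd1] at h₁
    set a : ℝ := dist y (γ 0) with ha
    set b : ℝ := dist y (γ 1) with hb
    have htri : D ≤ a + b := by
      calc D = dist (γ 0) (γ 1) := hD
        _ ≤ dist (γ 0) y + dist y (γ 1) := dist_triangle _ _ _
        _ = a + b := by rw [dist_comm (γ 0) y]
    have haD : 0 ≤ D := dist_nonneg
    have hquad : s * (1 - s) * D ^ 2 ≤ (1 - s) * a ^ 2 + s * b ^ 2 := by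
      have hss : (0:ℝ) ≤ s * (1 - s) := mul_nonneg hs0 (by linarith)
      have hsq : D ^ 2 ≤ (a + b) ^ 2 := by
        have := mul_self_le_mul_self haD htri
        nlinarith [this]
      nlinarith [sq_nonneg ((1 - s) * a - s * b), mul_nonneg hss (sub_nonneg.2 hsq)]
    -- weighted combinations
    have F0 := mul_le_mul_of_nonneg_left h₀ (by linarith : (0:ℝ) ≤ 1 - s)
    have F1 := mul_le_mul_of_nonneg_left h₁ hs0
    have H := mul_le_mul_of_nonneg_left hquad (by positivity : (0:ℝ) ≤ Real.exp (lam * t) / 2)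
    have hid : lam * Elam lam t = Real.exp (lam * t) - 1 := lam_mul_elam lam t
    have hid2 : lam * Elam lam t * (s * (1 - s) * D ^ 2) =
        (Real.exp (lam * t) - 1) * (s * (1 - s) * D ^ 2) := by rw [hid]
    have hqc : Elam lam t * q ≤ Elam lam t * c := by
      rw [hc]; linarith [F0, F1, H, hid2]
    have : q ≤ c := le_of_mul_le_mul_left hqc hE
    rw [hq]
    exact_mod_cast this
  -- conclude by lower semicontinuity
  by_contra hcon
  push_neg at hcon
  have hev1 : ∀ᶠ t in nhdsWithin 0 (Set.Ioi 0), (c : EReal) < φ (S t (γ s)) :=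
    (hScont (γ s)).eventually (hlsc (γ s) (c : EReal) hcon)
  have hev2 : ∀ᶠ t in nhdsWithin 0 (Set.Ioi 0), φ (S t (γ s)) ≤ (c : EReal) :=
    eventually_nhdsWithin_of_forall claim
  obtain ⟨t, h1', h2'⟩ := (hev1.and hev2).exists
  exact absurd (h1'.trans_le h2') (lt_irrefl _)
end

section
/- For any μ₀, μ₁, μ₂ ∈ 𝒫₂(ℝᵈ) and any constant speed geodesic (μ_s)_{s∈[0,1]} from μ₀ to μ₁ in the Wasserstein space: W₂²(μ_s, μ₂) ≥ (1−s)W₂²(μ₀,μ₂) + sW₂²(μ₁,μ₂) − s(1−s)W₂²(μ₀,μ₁) for all s ∈ [0,1]. (The Wasserstein space over ℝᵈ is positively curved.) -/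
/-!
Fix `s ∈ (0, 1)` and `ε > 0`, and glue `ε`-optimal couplings of `μₛ` with `μ₀`, `μ₁`, `μ₂` along
`μₛ` into one random vector `(Z, X₀, X₁, X₂)`. Integrate the Hilbert-space identity
`(1 - s)|a - c|² + s|b - c|² = |(1 - s)a + sb - c|² + s(1 - s)|a - b|²`.
At `c = Z`, the geodesic relations `W₂(μₛ, μ₀) = s W₂(μ₀, μ₁)`, `W₂(μₛ, μ₁) = (1 - s) W₂(μ₀, μ₁)`
and `W₂(μ₀, μ₁)² ≤ 𝔼|X₀ - X₁|²` force `Xₛ = (1 - s)X₀ + sX₁` to be `√ε`-close to `Z` in `L²`.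
At `c = X₂`, with Minkowski's inequality for `Xₛ - X₂ = (Xₛ - Z) + (Z - X₂)`, this gives the claim
up to an error that vanishes as `ε → 0`.
-/

open MeasureTheory
open scoped ENNReal

variable {d : ℕ}

/-- Squared 2-Wasserstein distance, as an infimum over couplings. -/
noncomputable def W2sq (μ ν : Measure (EuclideanSpace ℝ (Fin d))) : ℝ≥0∞ :=
  ⨅ π ∈ {π : Measure (EuclideanSpace ℝ (Fin d) × EuclideanSpace ℝ (Fin d)) |
      π.map Prod.fst = μ ∧ π.map Prod.snd = ν},
    ∫⁻ p, edist p.1 p.2 ^ 2 ∂π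

/-- 2-Wasserstein distance. -/
noncomputable def W2 (μ ν : Measure (EuclideanSpace ℝ (Fin d))) : ℝ≥0∞ :=
  (W2sq μ ν) ^ (1/2 : ℝ)

open ProbabilityTheory Set Topology

lemma ENNReal.rpow_half_sq (x : ℝ≥0∞) : (x ^ (1 / 2 : ℝ)) ^ 2 = x := by
  rw [← ENNReal.rpow_natCast, ← ENNReal.rpow_mul]; norm_num

lemma norm_sub_sq_convex_combination {E : Type*} [NormedAddCommGroup E] [InnerProductSpace ℝ E]
    (a b c : E) (s : ℝ) :
    (1 - s) * ‖a - c‖ ^ 2 + s * ‖b - c‖ ^ 2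
      = ‖(1 - s) • a + s • b - c‖ ^ 2 + s * (1 - s) * ‖a - b‖ ^ 2 := by
  rw [show (1 - s) • a + s • b - c = (1 - s) • (a - c) + s • (b - c) by module,
    show a - b = (a - c) - (b - c) by abel]
  generalize a - c = u, b - c = v
  rw [norm_add_sq_real, norm_sub_sq_real, norm_smul, norm_smul, real_inner_smul_left,
    real_inner_smul_right, Real.norm_eq_abs, Real.norm_eq_abs, mul_pow, mul_pow, sq_abs, sq_abs]
  ring

lemma edist_sq_convex_combination {E : Type*} [NormedAddCommGroup E] [InnerProductSpace ℝ E]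
    (a b c : E) {s : ℝ} (hs : s ∈ Icc (0 : ℝ) 1) :
    ENNReal.ofReal (1 - s) * edist a c ^ 2 + ENNReal.ofReal s * edist b c ^ 2
      = edist ((1 - s) • a + s • b) c ^ 2
        + ENNReal.ofReal s * ENNReal.ofReal (1 - s) * edist a b ^ 2 := by
  obtain ⟨hs0, hs1⟩ := hs
  have hs1' : 0 ≤ 1 - s := by linarith
  have := congrArg ENNReal.ofReal (norm_sub_sq_convex_combination a b c s)
  rw [ENNReal.ofReal_add (by positivity) (by positivity),
    ENNReal.ofReal_add (by positivity) (by positivity)] at this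
  simpa only [edist_dist, dist_eq_norm, ENNReal.ofReal_mul, hs0, hs1', mul_nonneg,
    ENNReal.ofReal_pow, norm_nonneg] using this

lemma MeasureTheory.Measure.exists_gluing_of_fst_eq {X Y₁ Y₂ Y₃ : Type*} [MeasurableSpace X]
    [MeasurableSpace Y₁] [MeasurableSpace Y₂] [MeasurableSpace Y₃]
    [StandardBorelSpace Y₁] [StandardBorelSpace Y₂] [StandardBorelSpace Y₃]
    [Nonempty Y₁] [Nonempty Y₂] [Nonempty Y₃]
    (α : Measure (X × Y₁)) (β : Measure (X × Y₂)) (γ : Measure (X × Y₃))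
    [IsFiniteMeasure α] [IsFiniteMeasure β] [IsFiniteMeasure γ]
    (hβ : β.fst = α.fst) (hγ : γ.fst = α.fst) :
    ∃ σ : Measure (X × Y₁ × Y₂ × Y₃), σ.map (fun p => (p.1, p.2.1)) = α ∧
      σ.map (fun p => (p.1, p.2.2.1)) = β ∧ σ.map (fun p => (p.1, p.2.2.2)) = γ := by
  set κ := α.condKernel ×ₖ (β.condKernel ×ₖ γ.condKernel)
  refine ⟨α.fst ⊗ₘ κ, (Measure.compProd_map measurable_fst).symm.trans ?_,
    (Measure.compProd_map (measurable_fst.comp measurable_snd)).symm.trans ?_,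
    (Measure.compProd_map (measurable_snd.comp measurable_snd)).symm.trans ?_⟩
  · rw [← Kernel.fst_eq, Kernel.fst_prod, Measure.disintegrate]
  · rw [Kernel.map_comp_right _ measurable_snd measurable_fst, ← Kernel.snd_eq, ← Kernel.fst_eq,
      Kernel.snd_prod, Kernel.fst_prod, ← hβ, Measure.disintegrate]
  · rw [Kernel.map_comp_right _ measurable_snd measurable_snd, ← Kernel.snd_eq, ← Kernel.snd_eq,
      Kernel.snd_prod, Kernel.snd_prod, ← hγ, Measure.disintegrate]

section MeanSqDist

variable {Ω E : Type*} [MeasurableSpace Ω]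

noncomputable def meanSqDist [EDist E] (σ : Measure Ω) (X Y : Ω → E) : ℝ≥0∞ :=
  ∫⁻ ω, edist (X ω) (Y ω) ^ 2 ∂σ

lemma meanSqDist_comm [PseudoEMetricSpace E] (σ : Measure Ω) (X Y : Ω → E) :
    meanSqDist σ X Y = meanSqDist σ Y X := by
  simp only [meanSqDist, edist_comm]

variable [MeasurableSpace E] {σ : Measure Ω}

lemma meanSqDist_le_sq_add [PseudoEMetricSpace E] [OpensMeasurableSpace E]
    [SecondCountableTopology E] {X Y Z : Ω → E}
    (hX : Measurable X) (hY : Measurable Y) (hZ : Measurable Z) :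
    meanSqDist σ X Z ≤
      (meanSqDist σ X Y ^ (1 / 2 : ℝ) + meanSqDist σ Y Z ^ (1 / 2 : ℝ)) ^ 2 := by
  have minkowski := ENNReal.lintegral_Lp_add_le (μ := σ) (hX.edist hY).aemeasurable
    (hY.edist hZ).aemeasurable one_le_two
  simp only [Pi.add_apply, ENNReal.rpow_two] at minkowski
  rw [← ENNReal.rpow_half_sq (meanSqDist σ X Z)]
  gcongr
  unfold meanSqDist
  refine le_trans ?_ minkowski
  gcongr with ω
  exact edist_triangle _ _ _

lemma meanSqDist_map [PseudoEMetricSpace E] [OpensMeasurableSpace E]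
    [SecondCountableTopology E] {X Y : Ω → E} (hX : Measurable X) (hY : Measurable Y) :
    meanSqDist (σ.map fun ω => (X ω, Y ω)) Prod.fst Prod.snd = meanSqDist σ X Y :=
  lintegral_map ((measurable_fst.edist measurable_snd).pow_const 2) (hX.prodMk hY)

variable [NormedAddCommGroup E] [InnerProductSpace ℝ E] [BorelSpace E]
  [SecondCountableTopology E]

lemma meanSqDist_convex_combination {X₀ X₁ Y : Ω → E} (hX₀ : Measurable X₀)
    (hX₁ : Measurable X₁) (hY : Measurable Y) {s : ℝ} (hs : s ∈ Icc (0 : ℝ) 1) :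
    ENNReal.ofReal (1 - s) * meanSqDist σ X₀ Y + ENNReal.ofReal s * meanSqDist σ X₁ Y
      = meanSqDist σ ((1 - s) • X₀ + s • X₁) Y
        + ENNReal.ofReal s * ENNReal.ofReal (1 - s) * meanSqDist σ X₀ X₁ := by
  unfold meanSqDist
  rw [← lintegral_const_mul' _ _ ENNReal.ofReal_ne_top,
    ← lintegral_const_mul' _ _ ENNReal.ofReal_ne_top,
    ← lintegral_const_mul' _ _ (by finiteness), ← lintegral_add_left (by fun_prop),
    ← lintegral_add_left (by fun_prop)]
  exact lintegral_congr fun ω => edist_sq_convex_combination _ _ _ hs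

lemma meanSqDist_convex_le {Z X₀ X₁ X₂ : Ω → E} (hZ : Measurable Z) (hX₀ : Measurable X₀)
    (hX₁ : Measurable X₁) (hX₂ : Measurable X₂) {s : ℝ} (hs : s ∈ Icc (0 : ℝ) 1)
    {C M ε : ℝ≥0∞} (hC : C ≠ ⊤) (hC₀₁ : C ≤ meanSqDist σ X₀ X₁)
    (h₀ : meanSqDist σ X₀ Z ≤ ENNReal.ofReal s ^ 2 * C + ε)
    (h₁ : meanSqDist σ X₁ Z ≤ ENNReal.ofReal (1 - s) ^ 2 * C + ε)
    (h₂ : meanSqDist σ Z X₂ ≤ M + ε) :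
    ENNReal.ofReal (1 - s) * meanSqDist σ X₀ X₂ + ENNReal.ofReal s * meanSqDist σ X₁ X₂
      ≤ (ε ^ (1 / 2 : ℝ) + (M + ε) ^ (1 / 2 : ℝ)) ^ 2
        + ENNReal.ofReal s * ENNReal.ofReal (1 - s) * C + ε := by
  set a := ENNReal.ofReal s
  set b := ENNReal.ofReal (1 - s)
  have hab : a + b = 1 := by
    rw [← ENNReal.ofReal_add hs.1 (by linarith [hs.2]), add_sub_cancel, ENNReal.ofReal_one]
  set Xₛ := (1 - s) • X₀ + s • X₁
  have hXₛ : Measurable Xₛ := by fun_prop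
  have hZ_bound : meanSqDist σ Xₛ Z + a * b * meanSqDist σ X₀ X₁ ≤ a * b * C + ε :=
    calc meanSqDist σ Xₛ Z + a * b * meanSqDist σ X₀ X₁
        = b * meanSqDist σ X₀ Z + a * meanSqDist σ X₁ Z :=
          (meanSqDist_convex_combination hX₀ hX₁ hZ hs).symm
      _ ≤ b * (a ^ 2 * C + ε) + a * (b ^ 2 * C + ε) := by gcongr
      _ = a * b * (a + b) * C + (a + b) * ε := by ring
      _ = a * b * C + ε := by rw [hab, mul_one, one_mul]
  have hXₛZ : meanSqDist σ Xₛ Z ≤ ε := by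
    refine (ENNReal.add_le_add_iff_right (a := a * b * C) (by finiteness)).1 ?_
    rw [add_comm ε]
    exact le_trans (by gcongr) hZ_bound
  have hX₀X₁ : a * b * meanSqDist σ X₀ X₁ ≤ a * b * C + ε := le_add_self.trans hZ_bound
  calc b * meanSqDist σ X₀ X₂ + a * meanSqDist σ X₁ X₂
      = meanSqDist σ Xₛ X₂ + a * b * meanSqDist σ X₀ X₁ :=
        meanSqDist_convex_combination hX₀ hX₁ hX₂ hs
    _ ≤ (meanSqDist σ Xₛ Z ^ (1 / 2 : ℝ) + meanSqDist σ Z X₂ ^ (1 / 2 : ℝ)) ^ 2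
          + (a * b * C + ε) := add_le_add (meanSqDist_le_sq_add hXₛ hZ hX₂) hX₀X₁
    _ ≤ (ε ^ (1 / 2 : ℝ) + (M + ε) ^ (1 / 2 : ℝ)) ^ 2 + (a * b * C + ε) := by gcongr
    _ = _ := (add_assoc _ _ _).symm

end MeanSqDist

section Wasserstein

variable {μ₀ μ₁ μ₂ μ ν : Measure (EuclideanSpace ℝ (Fin d))}

lemma W2_sq (μ ν : Measure (EuclideanSpace ℝ (Fin d))) : W2 μ ν ^ 2 = W2sq μ ν :=
  ENNReal.rpow_half_sq _

lemma W2sq_le_meanSqDist {Ω : Type*} [MeasurableSpace Ω] {σ : Measure Ω}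
    {X Y : Ω → EuclideanSpace ℝ (Fin d)} (hX : Measurable X) (hY : Measurable Y)
    (hXμ : σ.map X = μ) (hYν : σ.map Y = ν) : W2sq μ ν ≤ meanSqDist σ X Y := by
  rw [← meanSqDist_map hX hY]
  exact biInf_le _ ⟨(Measure.fst_map_prodMk hY).trans hXμ, (Measure.snd_map_prodMk hX).trans hYν⟩

lemma exists_coupling_meanSqDist_lt {c : ℝ≥0∞} (h : W2sq μ ν < c) :
    ∃ π : Measure (EuclideanSpace ℝ (Fin d) × EuclideanSpace ℝ (Fin d)),
      π.fst = μ ∧ π.snd = ν ∧ meanSqDist π Prod.fst Prod.snd < c := by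
  obtain ⟨π, hπ⟩ := iInf_lt_iff.1 h
  obtain ⟨⟨hfst, hsnd⟩, hlt⟩ := iInf_lt_iff.1 hπ
  exact ⟨π, hfst, hsnd, hlt⟩

lemma W2sq_convex_le_add_of_intermediate [IsFiniteMeasure μ] {s : ℝ} (hs : s ∈ Icc (0 : ℝ) 1)
    (hμ₀ : W2sq μ μ₀ = ENNReal.ofReal s ^ 2 * W2sq μ₀ μ₁)
    (hμ₁ : W2sq μ μ₁ = ENNReal.ofReal (1 - s) ^ 2 * W2sq μ₀ μ₁)
    (hC : W2sq μ₀ μ₁ ≠ ⊤) (hM : W2sq μ μ₂ ≠ ⊤) {ε : ℝ≥0∞} (hε : 0 < ε) :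
    ENNReal.ofReal (1 - s) * W2sq μ₀ μ₂ + ENNReal.ofReal s * W2sq μ₁ μ₂
      ≤ (ε ^ (1 / 2 : ℝ) + (W2sq μ μ₂ + ε) ^ (1 / 2 : ℝ)) ^ 2
        + ENNReal.ofReal s * ENNReal.ofReal (1 - s) * W2sq μ₀ μ₁ + ε := by
  have exists_near_optimal (ν) (hν : W2sq μ ν ≠ ⊤) :
      ∃ π : Measure (EuclideanSpace ℝ (Fin d) × EuclideanSpace ℝ (Fin d)), IsFiniteMeasure π ∧
        π.fst = μ ∧ π.snd = ν ∧ meanSqDist π Prod.fst Prod.snd ≤ W2sq μ ν + ε := by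
    obtain ⟨π, hfst, hsnd, hlt⟩ :=
      exists_coupling_meanSqDist_lt (ENNReal.lt_add_right hν hε.ne')
    have : IsFiniteMeasure (π.map Prod.fst) := by
      change IsFiniteMeasure π.fst; rw [hfst]; infer_instance
    exact ⟨π, Measure.isFiniteMeasure_of_map measurable_fst.aemeasurable,
      hfst, hsnd, hlt.le⟩
  obtain ⟨α, _, hα, hα₀, hα_cost⟩ := exists_near_optimal μ₀ (by rw [hμ₀]; finiteness)
  obtain ⟨η, _, hη, hη₁, hη_cost⟩ := exists_near_optimal μ₁ (by rw [hμ₁]; finiteness)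
  obtain ⟨β, _, hβ, hβ₂, hβ_cost⟩ := exists_near_optimal μ₂ hM
  obtain ⟨σ, hσα, hση, hσβ⟩ :=
    Measure.exists_gluing_of_fst_eq α η β (hη.trans hα.symm) (hβ.trans hα.symm)
  have law₀ : σ.map (fun p => p.2.1) = μ₀ := by
    rw [← hα₀, ← hσα, Measure.snd_map_prodMk measurable_fst]
  have law₁ : σ.map (fun p => p.2.2.1) = μ₁ := by
    rw [← hη₁, ← hση, Measure.snd_map_prodMk measurable_fst]
  have law₂ : σ.map (fun p => p.2.2.2) = μ₂ := by
    rw [← hβ₂, ← hσβ, Measure.snd_map_prodMk measurable_fst]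
  calc ENNReal.ofReal (1 - s) * W2sq μ₀ μ₂ + ENNReal.ofReal s * W2sq μ₁ μ₂
      ≤ ENNReal.ofReal (1 - s) * meanSqDist σ (fun p => p.2.1) (fun p => p.2.2.2)
        + ENNReal.ofReal s * meanSqDist σ (fun p => p.2.2.1) (fun p => p.2.2.2) := by
        gcongr
        · exact W2sq_le_meanSqDist (by fun_prop) (by fun_prop) law₀ law₂
        · exact W2sq_le_meanSqDist (by fun_prop) (by fun_prop) law₁ law₂
    _ ≤ _ := by
        refine meanSqDist_convex_le measurable_fst (by fun_prop) (by fun_prop) (by fun_prop) hs hC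
          (W2sq_le_meanSqDist (by fun_prop) (by fun_prop) law₀ law₁) ?_ ?_ ?_
        · rw [meanSqDist_comm, ← meanSqDist_map measurable_fst (by fun_prop), hσα, ← hμ₀]
          exact hα_cost
        · rw [meanSqDist_comm, ← meanSqDist_map measurable_fst (by fun_prop), hση, ← hμ₁]
          exact hη_cost
        · rw [← meanSqDist_map measurable_fst (by fun_prop), hσβ]
          exact hβ_cost

lemma W2sq_convex_le_of_intermediate [IsFiniteMeasure μ] {s : ℝ} (hs : s ∈ Ioo (0 : ℝ) 1)
    (hμ₀ : W2sq μ μ₀ = ENNReal.ofReal s ^ 2 * W2sq μ₀ μ₁)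
    (hμ₁ : W2sq μ μ₁ = ENNReal.ofReal (1 - s) ^ 2 * W2sq μ₀ μ₁) :
    ENNReal.ofReal (1 - s) * W2sq μ₀ μ₂ + ENNReal.ofReal s * W2sq μ₁ μ₂
      ≤ W2sq μ μ₂ + ENNReal.ofReal s * ENNReal.ofReal (1 - s) * W2sq μ₀ μ₁ := by
  by_cases hM : W2sq μ μ₂ = ⊤
  · simp [hM]
  by_cases hC : W2sq μ₀ μ₁ = ⊤
  · simp [hC, hs.1, hs.2]
  set F : ℝ≥0∞ → ℝ≥0∞ := fun ε => (ε ^ (1 / 2 : ℝ) + (W2sq μ μ₂ + ε) ^ (1 / 2 : ℝ)) ^ 2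
    + ENNReal.ofReal s * ENNReal.ofReal (1 - s) * W2sq μ₀ μ₁ + ε
  have hF : Continuous F := by fun_prop
  have hF₀ : F 0 = W2sq μ μ₂ + ENNReal.ofReal s * ENNReal.ofReal (1 - s) * W2sq μ₀ μ₁ := by
    simp only [F, ENNReal.zero_rpow_of_pos (by norm_num : (0 : ℝ) < 1 / 2), zero_add, add_zero,
      ENNReal.rpow_half_sq]
  have : (𝓝[>] (0 : ℝ≥0∞)).NeBot := nhdsGT_neBot_of_exists_gt ⟨1, one_pos⟩
  rw [← hF₀]
  exact ge_of_tendsto ((hF.tendsto 0).mono_left (nhdsWithin_le_nhds (s := Ioi 0)))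
    (eventually_nhdsWithin_of_forall fun ε hε =>
      W2sq_convex_le_add_of_intermediate (Ioo_subset_Icc_self hs) hμ₀ hμ₁ hC hM hε)

end Wasserstein

theorem wasserstein_space_positively_curved_general
    (μ₀ μ₁ μ₂ : Measure (EuclideanSpace ℝ (Fin d)))
    (μgeo : ℝ → Measure (EuclideanSpace ℝ (Fin d)))
    (hprob : ∀ s ∈ Set.Icc (0:ℝ) 1, IsProbabilityMeasure (μgeo s))
    (h0 : μgeo 0 = μ₀) (h1 : μgeo 1 = μ₁)
    (hgeo : ∀ s t : ℝ, s ∈ Set.Icc (0:ℝ) 1 → t ∈ Set.Icc (0:ℝ) 1 →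
        W2 (μgeo s) (μgeo t) = ENNReal.ofReal |s - t| * W2 μ₀ μ₁) :
    ∀ s : ℝ, s ∈ Set.Icc (0:ℝ) 1 →
      ENNReal.ofReal (1 - s) * W2sq μ₀ μ₂ + ENNReal.ofReal s * W2sq μ₁ μ₂ ≤
        W2sq (μgeo s) μ₂ + ENNReal.ofReal (s * (1 - s)) * W2sq μ₀ μ₁ := by
  rintro s ⟨hs₀, hs₁⟩
  rcases hs₀.eq_or_lt with rfl | hs₀
  · simp [h0]
  rcases hs₁.eq_or_lt with rfl | hs₁
  · simp [h1]
  have hs : s ∈ Icc (0 : ℝ) 1 := ⟨hs₀.le, hs₁.le⟩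
  have := hprob s hs
  have hdist (t : ℝ) (ht : t ∈ Icc (0 : ℝ) 1) :
      W2sq (μgeo s) (μgeo t) = ENNReal.ofReal |s - t| ^ 2 * W2sq μ₀ μ₁ := by
    rw [← W2_sq, hgeo s t hs ht, mul_pow, W2_sq]
  rw [ENNReal.ofReal_mul hs₀.le]
  refine W2sq_convex_le_of_intermediate ⟨hs₀, hs₁⟩ ?_ ?_
  · simpa [h0, abs_of_pos hs₀] using hdist 0 ⟨le_rfl, zero_le_one⟩
  · simpa [h1, abs_sub_comm s 1, abs_of_pos (sub_pos.2 hs₁)] using hdist 1 ⟨zero_le_one, le_rfl⟩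

theorem wasserstein_space_positively_curved
    (μ₀ μ₁ μ₂ : Measure (EuclideanSpace ℝ (Fin d)))
    [IsProbabilityMeasure μ₀] [IsProbabilityMeasure μ₁] [IsProbabilityMeasure μ₂]
    (hm₀ : ∫⁻ x, edist x 0 ^ 2 ∂μ₀ < ⊤) (hm₁ : ∫⁻ x, edist x 0 ^ 2 ∂μ₁ < ⊤)
    (hm₂ : ∫⁻ x, edist x 0 ^ 2 ∂μ₂ < ⊤)
    (μgeo : ℝ → Measure (EuclideanSpace ℝ (Fin d)))
    (hprob : ∀ s ∈ Set.Icc (0:ℝ) 1, IsProbabilityMeasure (μgeo s))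
    (h0 : μgeo 0 = μ₀) (h1 : μgeo 1 = μ₁)
    (hgeo : ∀ s t : ℝ, s ∈ Set.Icc (0:ℝ) 1 → t ∈ Set.Icc (0:ℝ) 1 →
        W2 (μgeo s) (μgeo t) = ENNReal.ofReal |s - t| * W2 μ₀ μ₁) :
    ∀ s : ℝ, s ∈ Set.Icc (0:ℝ) 1 →
      ENNReal.ofReal (1 - s) * W2sq μ₀ μ₂ + ENNReal.ofReal s * W2sq μ₁ μ₂ ≤
        W2sq (μgeo s) μ₂ + ENNReal.ofReal (s * (1 - s)) * W2sq μ₀ μ₁ :=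
  wasserstein_space_positively_curved_general μ₀ μ₁ μ₂ μgeo hprob h0 h1 hgeo
end
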